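/- Let x = ∑_{k=1}^s c_k a(f_k, φ_k) with c_k > 0, where [a(f,φ)]_j = e^{i(2πfj+φ)}. Set u = ∑_k c_k a(f_k, 0) and t = ∑_k c_k. Then Toep(u) = ∑_k c_k a(f_k,φ_k) a(f_k,φ_k)*, and the block matrix [[Toep(u), x],[x*, t]] is positive semidefinite with trace(Toep(u))/n = t. -/

import Mathlib

open Complex Matrix
open scoped ComplexOrder

/-- The atom `a(f, φ)` with entries `e^{i(2πfj + φ)}`, `j = 0, ..., n-1`. -/
noncomputable def atom (n : ℕ) (f φ : ℝ) : Fin n → ℂ :=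
  fun j => Complex.exp (Complex.I * (2 * Real.pi * f * j + φ))

/-- The Hermitian Toeplitz matrix with first column `u`. -/
noncomputable def Toep (n : ℕ) (u : Fin n → ℂ) : Matrix (Fin n) (Fin n) ℂ :=
  fun j k =>
    if (k : ℕ) ≤ (j : ℕ) then u ⟨(j : ℕ) - k, Nat.lt_of_le_of_lt (Nat.sub_le _ _) j.isLt⟩
    else star (u ⟨(k : ℕ) - j, Nat.lt_of_le_of_lt (Nat.sub_le _ _) k.isLt⟩)

/-- The block matrix `[[Toep(u), x], [x*, t]]`. -/
noncomputable def blockMat (n : ℕ) (u x : Fin n → ℂ) (t : ℝ) :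
    Matrix (Fin n ⊕ Fin 1) (Fin n ⊕ Fin 1) ℂ :=
  Matrix.fromBlocks (Toep n u) (fun j _ => x j) (fun _ k => star (x k)) (fun _ _ => (t : ℂ))

/-! The phase of an atom `a = a(f, φ)` cancels in `a_j · conj a_k = e^{2πi f (j - k)}`, so
`a a* = Toep(a(f, 0))`. Since `Toep` and `blockMat` are linear over real coefficients, the block
matrix is `∑ c_k w_k w_k*` with `w_k = (a(f_k, φ_k), 1)`, a nonnegative combination of rank-one
positive semidefinite matrices, and the constant diagonal of `Toep(u)` is `u_0 = ∑ c_k = t`. -/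

variable {n : ℕ}

lemma atom_zero_apply_sub (f φ : ℝ) {j k : Fin n} (hkj : (k : ℕ) ≤ j) (h : (j : ℕ) - k < n) :
    atom n f 0 ⟨j - k, h⟩ = atom n f φ j * star (atom n f φ k) := by
  simp only [atom, Complex.star_def, ← Complex.exp_conj, map_mul, map_add, Complex.conj_I,
    Complex.conj_ofReal, map_natCast, map_ofNat, ← Complex.exp_add]
  push_cast [Nat.cast_sub hkj]
  ring_nf

lemma Toep_atom_zero (f φ : ℝ) :
    Toep n (atom n f 0) = vecMulVec (atom n f φ) (star (atom n f φ)) := by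
  ext j k
  rw [Toep, vecMulVec_apply, Pi.star_apply]
  split_ifs with hkj
  · exact atom_zero_apply_sub f φ hkj _
  · rw [atom_zero_apply_sub f φ (not_le.1 hkj).le, star_mul', star_star, mul_comm]

lemma Toep_sum_ofReal_smul {ι : Type*} (s : Finset ι) (c : ι → ℝ) (v : ι → Fin n → ℂ) :
    Toep n (∑ i ∈ s, (c i : ℂ) • v i) = ∑ i ∈ s, (c i : ℂ) • Toep n (v i) := by
  ext j k
  simp only [Toep, Matrix.sum_apply, Matrix.smul_apply, Finset.sum_apply, Pi.smul_apply]
  split_ifs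
  · rfl
  · simp [star_sum, Complex.conj_ofReal]

lemma trace_Toep (hn : 0 < n) (u : Fin n → ℂ) : trace (Toep n u) = n * u ⟨0, hn⟩ := by
  have hdiag : ∀ i : Fin n, Toep n u i i = u ⟨0, hn⟩ := fun i => by simp [Toep]
  simp [trace, hdiag]

lemma atom_zero_apply_zero (hn : 0 < n) (f : ℝ) : atom n f 0 ⟨0, hn⟩ = 1 := by
  simp [atom]

lemma blockMat_sum_ofReal_smul {ι : Type*} (s : Finset ι) (c : ι → ℝ) (u x : ι → Fin n → ℂ)
    (t : ι → ℝ) :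
    blockMat n (∑ i ∈ s, (c i : ℂ) • u i) (∑ i ∈ s, (c i : ℂ) • x i) (∑ i ∈ s, c i * t i) =
      ∑ i ∈ s, (c i : ℂ) • blockMat n (u i) (x i) (t i) := by
  ext (j | j) (k | k) <;>
    simp only [blockMat, Toep_sum_ofReal_smul, fromBlocks, of_apply, Sum.elim_inl, Sum.elim_inr,
      Matrix.sum_apply, Matrix.smul_apply] <;>
    simp [Finset.sum_apply, star_sum, Complex.conj_ofReal]

lemma blockMat_atom (f φ : ℝ) :
    blockMat n (atom n f 0) (atom n f φ) 1 =
      vecMulVec (Sum.elim (atom n f φ) 1) (star (Sum.elim (atom n f φ) 1)) := by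
  ext (j | j) (k | k) <;> simp [blockMat, Toep_atom_zero f φ, vecMulVec_apply, fromBlocks]

theorem feasibility_of_atomic_decomposition_general (n s : ℕ) (hn : 0 < n)
    (c : Fin s → ℝ) (f φ : Fin s → ℝ)
    (hc : ∀ k, 0 < c k)
    (x u : Fin n → ℂ) (t : ℝ)
    (hx : x = ∑ k, (c k : ℂ) • atom n (f k) (φ k))
    (hu : u = ∑ k, (c k : ℂ) • atom n (f k) 0)
    (ht : t = ∑ k, c k) :
    Toep n u = ∑ k, (c k : ℂ) •
        Matrix.vecMulVec (atom n (f k) (φ k)) (star (atom n (f k) (φ k))) ∧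
    (blockMat n u x t).PosSemidef ∧
    (Matrix.trace (Toep n u)).re / n = t := by
  refine ⟨?_, ?_, ?_⟩
  · rw [hu, Toep_sum_ofReal_smul]
    exact Finset.sum_congr rfl fun k _ => by rw [Toep_atom_zero _ (φ k)]
  · have hblock : blockMat n u x t =
        ∑ k, (c k : ℂ) • blockMat n (atom n (f k) 0) (atom n (f k) (φ k)) 1 := by
      rw [← blockMat_sum_ofReal_smul, hu, hx, ht]
      simp only [mul_one]
    rw [hblock]
    refine posSemidef_sum _ fun k _ => ?_
    rw [blockMat_atom]
    exact (posSemidef_vecMulVec_self_star _).smul (Complex.zero_le_real.2 (hc k).le)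
  · have hu0 : u ⟨0, hn⟩ = ∑ k, (c k : ℂ) := by
      simp [hu, Finset.sum_apply, atom_zero_apply_zero hn]
    rw [trace_Toep hn, hu0, ht, ← Complex.ofReal_natCast, ← Complex.ofReal_sum,
      ← Complex.ofReal_mul, Complex.ofReal_re]
    field_simp

theorem feasibility_of_atomic_decomposition (n s : ℕ) (hn : 0 < n)
    (c : Fin s → ℝ) (f φ : Fin s → ℝ)
    (hc : ∀ k, 0 < c k) (hf : ∀ k, f k ∈ Set.Ico (0 : ℝ) 1)
    (hφ : ∀ k, φ k ∈ Set.Ico (0 : ℝ) (2 * Real.pi))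
    (x u : Fin n → ℂ) (t : ℝ)
    (hx : x = ∑ k, (c k : ℂ) • atom n (f k) (φ k))
    (hu : u = ∑ k, (c k : ℂ) • atom n (f k) 0)
    (ht : t = ∑ k, c k) :
    Toep n u = ∑ k, (c k : ℂ) •
        Matrix.vecMulVec (atom n (f k) (φ k)) (star (atom n (f k) (φ k))) ∧
    (blockMat n u x t).PosSemidef ∧
    (Matrix.trace (Toep n u)).re / n = t :=
  feasibility_of_atomic_decomposition_general n s hn c f φ hc x u t hx hu ht
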